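/- arXiv:2010.11989 — 6 statements merged into one kernel-verified Lean document; each statement's English description precedes it below -/
import Mathlib

section
/- Fix an integer d ≥ 1 and reals τ, α, β, γ, δ, θ > 0, and let Δ_1, …, Δ_d be nonnegative reals with ∑_{j=1}^{d} Δ_j ≤ 2δn, where n = βdτ. Then the number of indices j ∈ {1,…,d} that are (θ,γ)-locally bad is at most (4/(γα))(1 + 1/θ)·δβ·d; that is, the fraction of (θ,γ)-locally bad blocks is at most (4/(γα))(1 + 1/θ)·δβ. -/
lemma cover_lemma_aux (d : ℕ) (w : ℕ → ℝ) (hw : ∀ i ∈ Finset.Icc 1 d, 0 ≤ w i)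
    (S : Finset ℕ) (A B : ℕ → ℕ)
    (hwit : ∀ j ∈ S, 1 ≤ A j ∧ A j ≤ j ∧ j ≤ B j ∧ B j ≤ d ∧
      ((B j : ℝ) - (A j : ℝ) + 1) < ∑ i ∈ Finset.Icc (A j) (B j), w i) :
    (S.card : ℝ) ≤ 2 * ∑ i ∈ Finset.Icc 1 d, w i := by
  classical
  set covers : Finset ℕ → Prop :=
    fun T => ∀ s ∈ S, ∃ j ∈ T, s ∈ Finset.Icc (A j) (B j) with hcovers
  have hScov : covers S := by
    intro s hs
    exact ⟨s, hs, Finset.mem_Icc.2 ⟨(hwit s hs).2.1, (hwit s hs).2.2.1⟩⟩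
  obtain ⟨T, hT, hTmin⟩ := Finset.exists_min_image
      ((S.powerset).filter covers) Finset.card
      ⟨S, Finset.mem_filter.2 ⟨Finset.mem_powerset.2 le_rfl, hScov⟩⟩
  rw [Finset.mem_filter, Finset.mem_powerset] at hT
  obtain ⟨hTsub, hTcov⟩ := hT
  -- each point lies in at most 2 selected intervals
  have hoverlap : ∀ i : ℕ,
      (T.filter (fun j => i ∈ Finset.Icc (A j) (B j))).card ≤ 2 := by
    intro i
    by_contra hcon
    push_neg at hcon
    set F := T.filter (fun j => i ∈ Finset.Icc (A j) (B j)) with hF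
    have hFne : F.Nonempty := Finset.card_pos.1 (by omega)
    obtain ⟨j1, hj1, hj1min⟩ := F.exists_min_image A hFne
    obtain ⟨j2, hj2, hj2max⟩ := F.exists_max_image B hFne
    have hpair : ({j1, j2} : Finset ℕ).card ≤ 2 := by
      apply (Finset.card_insert_le _ _).trans; simp
    have hne : (F \ {j1, j2}).Nonempty := by
      apply Finset.card_pos.1
      have := Finset.card_le_card_sdiff_add_card (s := F) (t := {j1, j2})
      omega
    obtain ⟨j3, hj3⟩ := hne
    rw [Finset.mem_sdiff] at hj3
    obtain ⟨hj3F, hj3ne⟩ := hj3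
    simp only [Finset.mem_insert, Finset.mem_singleton, not_or] at hj3ne
    have hj1T : j1 ∈ T := (Finset.mem_filter.1 hj1).1
    have hj2T : j2 ∈ T := (Finset.mem_filter.1 hj2).1
    have hj3T : j3 ∈ T := (Finset.mem_filter.1 hj3F).1
    have hi1 : i ∈ Finset.Icc (A j1) (B j1) := (Finset.mem_filter.1 hj1).2
    have hi2 : i ∈ Finset.Icc (A j2) (B j2) := (Finset.mem_filter.1 hj2).2
    have hi3 : i ∈ Finset.Icc (A j3) (B j3) := (Finset.mem_filter.1 hj3F).2
    rw [Finset.mem_Icc] at hi1 hi2 hi3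
    -- T.erase j3 still covers
    have hcov' : covers (T.erase j3) := by
      intro s hs
      obtain ⟨j, hjT, hjmem⟩ := hTcov s hs
      by_cases hjj : j = j3
      · subst hjj
        rw [Finset.mem_Icc] at hjmem
        rcases le_or_gt s i with hsi | his
        · refine ⟨j1, Finset.mem_erase.2 ⟨fun h => hj3ne.1 h.symm, hj1T⟩, ?_⟩
          exact Finset.mem_Icc.2 ⟨le_trans (hj1min j hj3F) hjmem.1, le_trans hsi hi1.2⟩
        · refine ⟨j2, Finset.mem_erase.2 ⟨fun h => hj3ne.2 h.symm, hj2T⟩, ?_⟩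
          exact Finset.mem_Icc.2 ⟨le_trans hi2.1 his.le, le_trans hjmem.2 (hj2max j hj3F)⟩
      · exact ⟨j, Finset.mem_erase.2 ⟨hjj, hjT⟩, hjmem⟩
    have hmem : T.erase j3 ∈ (S.powerset).filter covers :=
      Finset.mem_filter.2 ⟨Finset.mem_powerset.2 ((Finset.erase_subset _ _).trans hTsub), hcov'⟩
    have := hTmin _ hmem
    have hlt : (T.erase j3).card < T.card := Finset.card_erase_lt_of_mem hj3T
    omega
  -- interval subset facts
  have hIsub : ∀ j ∈ T, Finset.Icc (A j) (B j) ⊆ Finset.Icc 1 d := by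
    intro j hj
    have h := hwit j (hTsub hj)
    exact Finset.Icc_subset_Icc h.1 h.2.2.2.1
  -- main chain
  have h1 : (S.card : ℝ) ≤ ∑ j ∈ T, ((Finset.Icc (A j) (B j)).card : ℝ) := by
    have hsub : S ⊆ T.biUnion (fun j => Finset.Icc (A j) (B j)) := by
      intro s hs
      obtain ⟨j, hjT, hjm⟩ := hTcov s hs
      exact Finset.mem_biUnion.2 ⟨j, hjT, hjm⟩
    have := (Finset.card_le_card hsub).trans Finset.card_biUnion_le
    exact_mod_cast this
  have h2 : ∀ j ∈ T, ((Finset.Icc (A j) (B j)).card : ℝ) ≤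
      ∑ i ∈ Finset.Icc (A j) (B j), w i := by
    intro j hj
    have h := hwit j (hTsub hj)
    have hab : A j ≤ B j + 1 := by omega
    have hc : ((Finset.Icc (A j) (B j)).card : ℝ) = (B j : ℝ) - A j + 1 := by
      rw [Nat.card_Icc, Nat.cast_sub hab]
      push_cast
      ring
    rw [hc]
    exact h.2.2.2.2.le
  have h3 : ∑ j ∈ T, ∑ i ∈ Finset.Icc (A j) (B j), w i ≤
      2 * ∑ i ∈ Finset.Icc 1 d, w i := by
    have hrw : ∀ j ∈ T, ∑ i ∈ Finset.Icc (A j) (B j), w i =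
        ∑ i ∈ Finset.Icc 1 d, if i ∈ Finset.Icc (A j) (B j) then w i else 0 := by
      intro j hj
      rw [← Finset.sum_filter]
      congr 1
      ext i
      simp only [Finset.mem_filter]
      constructor
      · intro hi
        exact ⟨hIsub j hj hi, hi⟩
      · exact fun hi => hi.2
    calc ∑ j ∈ T, ∑ i ∈ Finset.Icc (A j) (B j), w i
        = ∑ j ∈ T, ∑ i ∈ Finset.Icc 1 d,
            (if i ∈ Finset.Icc (A j) (B j) then w i else 0) :=
          Finset.sum_congr rfl hrw
      _ = ∑ i ∈ Finset.Icc 1 d, ∑ j ∈ T,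
            (if i ∈ Finset.Icc (A j) (B j) then w i else 0) := Finset.sum_comm
      _ = ∑ i ∈ Finset.Icc 1 d,
            ((T.filter (fun j => i ∈ Finset.Icc (A j) (B j))).card : ℝ) * w i := by
          refine Finset.sum_congr rfl fun i hi => ?_
          rw [← Finset.sum_filter, Finset.sum_const, nsmul_eq_mul]
      _ ≤ ∑ i ∈ Finset.Icc 1 d, 2 * w i := by
          refine Finset.sum_le_sum fun i hi => ?_
          exact mul_le_mul_of_nonneg_right (by exact_mod_cast hoverlap i) (hw i hi)
      _ = 2 * ∑ i ∈ Finset.Icc 1 d, w i := (Finset.mul_sum _ _ _).symm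
  calc (S.card : ℝ) ≤ ∑ j ∈ T, ((Finset.Icc (A j) (B j)).card : ℝ) := h1
    _ ≤ ∑ j ∈ T, ∑ i ∈ Finset.Icc (A j) (B j), w i := Finset.sum_le_sum h2
    _ ≤ 2 * ∑ i ∈ Finset.Icc 1 d, w i := h3

/-- **Fraction of (θ,γ)-locally bad blocks** (Lemma 13): if the per-block
corruptions `Δ₁, …, Δ_d ≥ 0` have total at most `2δn` with `n = βdτ`, then the
number of blocks `j ∈ {1,…,d}` that are `(θ,γ)`-locally bad — i.e. for which
there exist `a ≤ j ≤ b` in `{1,…,d}` violating either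
`∑_{i=a}^{b} Δᵢ ≤ γ(b−a+1)ατ` or
`#{γ-bad blocks in [a,b]} ≤ θ(b−a+1)` —
is at most `(4/(γα))(1 + 1/θ)·δβ·d`. -/
theorem fraction_locally_bad_blocks (d : ℕ) (hd : 1 ≤ d)
    (τ α β γ δ θ : ℝ) (hτ : 0 < τ) (hα : 0 < α) (hβ : 0 < β) (hγ : 0 < γ)
    (hδ : 0 < δ) (hθ : 0 < θ)
    (Δ : ℕ → ℝ) (hΔ : ∀ j ∈ Finset.Icc 1 d, 0 ≤ Δ j)
    (hsum : ∑ j ∈ Finset.Icc 1 d, Δ j ≤ 2 * δ * (β * d * τ)) :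
    (({j | j ∈ Finset.Icc 1 d ∧
        ¬ (∀ a b : ℕ, 1 ≤ a → a ≤ j → j ≤ b → b ≤ d →
            (∑ i ∈ Finset.Icc a b, Δ i ≤ γ * ((b : ℝ) - a + 1) * α * τ ∧
             ({i | i ∈ Finset.Icc a b ∧ γ * α * τ < Δ i}.ncard : ℝ) ≤
               θ * ((b : ℝ) - a + 1)))}.ncard : ℝ)) ≤
      (4 / (γ * α)) * (1 + 1 / θ) * δ * β * d := by
  classical
  have hγατ : (0:ℝ) < γ * α * τ := by positivity
  -- the weight function
  set w : ℕ → ℝ := fun i => Δ i / (γ * α * τ) + (if γ * α * τ < Δ i then 1 / θ else 0)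
    with hwdef
  have hw : ∀ i ∈ Finset.Icc 1 d, 0 ≤ w i := by
    intro i hi
    have := hΔ i hi
    have h1 : 0 ≤ Δ i / (γ * α * τ) := div_nonneg this hγατ.le
    have h2 : 0 ≤ (if γ * α * τ < Δ i then 1 / θ else 0) := by positivity
    exact add_nonneg h1 h2
  -- ncards of bad sets as filter cards
  have hset : ∀ a b : ℕ, ({i | i ∈ Finset.Icc a b ∧ γ * α * τ < Δ i}.ncard : ℕ) =
      ((Finset.Icc a b).filter (fun i => γ * α * τ < Δ i)).card := by
    intro a b
    rw [← Set.ncard_coe_finset]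
    congr 1
    ext i
    simp
  -- the set of locally bad blocks as a Finset
  set P : ℕ → Prop := fun j =>
      ¬ (∀ a b : ℕ, 1 ≤ a → a ≤ j → j ≤ b → b ≤ d →
            (∑ i ∈ Finset.Icc a b, Δ i ≤ γ * ((b : ℝ) - a + 1) * α * τ ∧
             ({i | i ∈ Finset.Icc a b ∧ γ * α * τ < Δ i}.ncard : ℝ) ≤
               θ * ((b : ℝ) - a + 1))) with hP
  set Sfin : Finset ℕ := (Finset.Icc 1 d).filter P with hSfin
  have hseteq : {j | j ∈ Finset.Icc 1 d ∧ P j} = ↑Sfin := by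
    ext j; simp [hSfin]
  have hncard : ({j | j ∈ Finset.Icc 1 d ∧ P j}.ncard : ℝ) = (Sfin.card : ℝ) := by
    rw [hseteq, Set.ncard_coe_finset]
  rw [hncard]
  -- witnesses
  have hwitness : ∀ j ∈ Sfin, ∃ a b : ℕ, 1 ≤ a ∧ a ≤ j ∧ j ≤ b ∧ b ≤ d ∧
      ((b : ℝ) - (a : ℝ) + 1) < ∑ i ∈ Finset.Icc a b, w i := by
    intro j hj
    have hj2 : P j := (Finset.mem_filter.1 hj).2
    rw [hP] at hj2
    push_neg at hj2
    obtain ⟨a, b, ha1, haj, hjb, hbd, hnc⟩ := hj2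
    refine ⟨a, b, ha1, haj, hjb, hbd, ?_⟩
    have hab : a ≤ b := haj.trans hjb
    have hsubI : Finset.Icc a b ⊆ Finset.Icc 1 d := Finset.Icc_subset_Icc ha1 hbd
    by_cases hC1 : ∑ i ∈ Finset.Icc a b, Δ i ≤ γ * ((b : ℝ) - a + 1) * α * τ
    · -- the count condition fails
      have hC2 := hnc hC1
      rw [hset a b] at hC2
      set c : ℕ := ((Finset.Icc a b).filter (fun i => γ * α * τ < Δ i)).card with hc
      calc (b : ℝ) - a + 1 < (c : ℝ) / θ := by
            rw [lt_div_iff₀ hθ]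
            calc ((b:ℝ) - a + 1) * θ = θ * ((b:ℝ) - a + 1) := by ring
              _ < c := hC2
        _ = ∑ i ∈ Finset.Icc a b, (if γ * α * τ < Δ i then 1 / θ else 0) := by
            rw [← Finset.sum_filter, Finset.sum_const, nsmul_eq_mul]
            rw [← hc]; field_simp
        _ ≤ ∑ i ∈ Finset.Icc a b, w i := by
            refine Finset.sum_le_sum fun i hi => ?_
            have := div_nonneg (hΔ i (hsubI hi)) hγατ.le
            rw [hwdef]
            simp only
            linarith
    · push_neg at hC1
      calc (b : ℝ) - a + 1 < (∑ i ∈ Finset.Icc a b, Δ i) / (γ * α * τ) := by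
            rw [lt_div_iff₀ hγατ]
            calc ((b:ℝ) - a + 1) * (γ * α * τ) = γ * ((b:ℝ) - a + 1) * α * τ := by ring
              _ < ∑ i ∈ Finset.Icc a b, Δ i := hC1
        _ = ∑ i ∈ Finset.Icc a b, Δ i / (γ * α * τ) := Finset.sum_div _ _ _
        _ ≤ ∑ i ∈ Finset.Icc a b, w i := by
            refine Finset.sum_le_sum fun i hi => ?_
            rw [hwdef]
            simp only
            have : (0:ℝ) ≤ (if γ * α * τ < Δ i then 1 / θ else 0) := by positivity
            linarith
  choose! A B hAB using hwitness
  have hcover := cover_lemma_aux d w hw Sfin A B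
    (fun j hj => ⟨(hAB j hj).1, (hAB j hj).2.1, (hAB j hj).2.2.1,
      (hAB j hj).2.2.2.1, (hAB j hj).2.2.2.2⟩)
  refine hcover.trans ?_
  -- bound the total weight
  set X : ℝ := ∑ i ∈ Finset.Icc 1 d, Δ i with hX
  set Bc : ℕ := ((Finset.Icc 1 d).filter (fun i => γ * α * τ < Δ i)).card with hBc
  have hXnn : 0 ≤ X := Finset.sum_nonneg hΔ
  have hWsplit : ∑ i ∈ Finset.Icc 1 d, w i = X / (γ * α * τ) + (Bc : ℝ) * (1 / θ) := by
    rw [hwdef]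
    rw [Finset.sum_add_distrib, ← Finset.sum_div]
    congr 1
    rw [← Finset.sum_filter, Finset.sum_const, nsmul_eq_mul]
  have hBcle : (Bc : ℝ) * (γ * α * τ) ≤ X := by
    have h1 : (Bc : ℝ) * (γ * α * τ) ≤
        ∑ i ∈ (Finset.Icc 1 d).filter (fun i => γ * α * τ < Δ i), Δ i := by
      have := Finset.card_nsmul_le_sum
        ((Finset.Icc 1 d).filter (fun i => γ * α * τ < Δ i)) Δ (γ * α * τ)
        (fun i hi => (Finset.mem_filter.1 hi).2.le)
      rw [nsmul_eq_mul] at this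
      exact_mod_cast this
    refine h1.trans ?_
    exact Finset.sum_le_sum_of_subset_of_nonneg (Finset.filter_subset _ _)
      (fun i hi _ => hΔ i hi)
  -- final arithmetic
  set K : ℝ := 2 * δ * β * d / (γ * α) with hK
  have hKγατ : K * (γ * α * τ) = 2 * δ * (β * d * τ) := by
    rw [hK, div_mul_eq_mul_div, div_eq_iff (by positivity)]
    ring
  have h1 : X / (γ * α * τ) ≤ K := by
    rw [div_le_iff₀ hγατ, hKγατ]
    exact hsum
  have h2 : (Bc : ℝ) ≤ K := by
    have : (Bc : ℝ) * (γ * α * τ) ≤ K * (γ * α * τ) := by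
      rw [hKγατ]; exact hBcle.trans hsum
    exact le_of_mul_le_mul_right this hγατ
  have hrhs : (4 / (γ * α)) * (1 + 1 / θ) * δ * β * (d : ℝ) = 2 * K + 2 * K * (1 / θ) := by
    rw [hK]
    field_simp
    ring
  rw [hWsplit, hrhs]
  have hθinv : (0:ℝ) ≤ 1 / θ := by positivity
  nlinarith [mul_le_mul_of_nonneg_right h2 hθinv]
end

section
/- Let d ≥ 1 be an integer, let Δ_1, …, Δ_d be nonnegative reals with ∑_{j=1}^{d} Δ_j ≤ E, and let c > 0 be a real. Then the number of indices j ∈ {1,…,d} for which there exists an integer b with j ≤ b ≤ d and ∑_{i=j}^{b} Δ_i > c·(b − j + 1) is at most E/c. -/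
/-!
Greedy covering from the left: the leftmost index `j` with a witness `[j, b]` pays for all
`b - j + 1` indices of its interval out of the Δ-mass `∑_{i=j}^{b} Δᵢ > c (b - j + 1)`, and
the indices right of `b` are handled recursively on `[b + 1, d]`. The intervals so obtained
are disjoint, so `c` times the number of witnessed indices is at most `∑ Δᵢ ≤ E`.
-/

open Finset

def HasRightWitness (Δ : ℕ → ℝ) (c : ℝ) (d j : ℕ) : Prop :=
  ∃ b : ℕ, j ≤ b ∧ b ≤ d ∧ c * ((b : ℝ) - j + 1) < ∑ i ∈ Icc j b, Δ i

theorem sum_Icc_add_sum_Icc_succ_le {M : Type*} [AddCommMonoid M] [PartialOrder M]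
    [IsOrderedAddMonoid M] {f : ℕ → M} {a j b d : ℕ} (hf : ∀ i ∈ Icc a d, 0 ≤ f i)
    (haj : a ≤ j) (hjb : j ≤ b) (hbd : b ≤ d) :
    ∑ i ∈ Icc j b, f i + ∑ i ∈ Icc (b + 1) d, f i ≤ ∑ i ∈ Icc a d, f i := by
  have hdisj : Disjoint (Icc j b) (Icc (b + 1) d) :=
    disjoint_left.2 fun x hx hx' => by simp only [mem_Icc] at hx hx'; omega
  rw [← sum_union hdisj]
  refine sum_le_sum_of_subset_of_nonneg (fun x hx => ?_) fun x hx _ => hf x hx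
  simp only [mem_union, mem_Icc] at hx ⊢
  omega

open scoped Classical in
theorem mul_card_hasRightWitness_le {Δ : ℕ → ℝ} {c : ℝ} {d : ℕ} (hc : 0 ≤ c) (a : ℕ)
    (hΔ : ∀ i ∈ Icc a d, 0 ≤ Δ i) :
    c * #{j ∈ Icc a d | HasRightWitness Δ c d j} ≤ ∑ i ∈ Icc a d, Δ i := by
  set W := {j ∈ Icc a d | HasRightWitness Δ c d j}
  rcases W.eq_empty_or_nonempty with hW | hW
  · simpa [hW] using sum_nonneg hΔ
  set j := W.min' hW
  obtain ⟨hj, b, hjb, hbd, hwit⟩ := mem_filter.1 (W.min'_mem hW)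
  have haj : a ≤ j := (mem_Icc.1 hj).1
  set W' := {j ∈ Icc (b + 1) d | HasRightWitness Δ c d j}
  have hcover : W ⊆ Icc j b ∪ W' := by
    intro x hx
    have hjx : j ≤ x := W.min'_le x hx
    obtain ⟨hx, hxw⟩ := mem_filter.1 hx
    rcases le_or_gt x b with hxb | hbx
    · exact mem_union_left _ (mem_Icc.2 ⟨hjx, hxb⟩)
    · exact mem_union_right _ (mem_filter.2 ⟨mem_Icc.2 ⟨hbx, (mem_Icc.1 hx).2⟩, hxw⟩)
  have hcard : (#W : ℝ) ≤ ((b : ℝ) - j + 1) + #W' := by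
    have h := (card_le_card hcover).trans (card_union_le _ _)
    rw [Nat.card_Icc] at h
    have h' : ((b + 1 - j : ℕ) : ℝ) = (b : ℝ) - j + 1 := by
      rw [Nat.cast_sub (by omega)]; push_cast; ring
    rw [← h']
    exact_mod_cast h
  have hrest : c * #W' ≤ ∑ i ∈ Icc (b + 1) d, Δ i :=
    mul_card_hasRightWitness_le hc (b + 1) fun i hi =>
      hΔ i (Icc_subset_Icc (by omega) le_rfl hi)
  calc c * #W ≤ c * ((b : ℝ) - j + 1) + c * #W' := by
        rw [← mul_add]; exact mul_le_mul_of_nonneg_left hcard hc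
    _ ≤ ∑ i ∈ Icc j b, Δ i + ∑ i ∈ Icc (b + 1) d, Δ i := add_le_add hwit.le hrest
    _ ≤ ∑ i ∈ Icc a d, Δ i := sum_Icc_add_sum_Icc_succ_le hΔ haj hjb hbd
termination_by d + 1 - a

theorem right_witness_covering_general (d : ℕ)
    (Δ : ℕ → ℝ) (hΔ : ∀ j ∈ Finset.Icc 1 d, 0 ≤ Δ j)
    (E : ℝ) (hsum : ∑ j ∈ Finset.Icc 1 d, Δ j ≤ E)
    (c : ℝ) (hc : 0 < c) :
    (({j | j ∈ Finset.Icc 1 d ∧ ∃ b : ℕ, j ≤ b ∧ b ≤ d ∧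
        c * ((b : ℝ) - j + 1) < ∑ i ∈ Finset.Icc j b, Δ i}.ncard : ℝ)) ≤ E / c := by
  classical
  have hset : {j | j ∈ Icc 1 d ∧ ∃ b : ℕ, j ≤ b ∧ b ≤ d ∧
      c * ((b : ℝ) - j + 1) < ∑ i ∈ Icc j b, Δ i} = ↑{j ∈ Icc 1 d | HasRightWitness Δ c d j} := by
    rw [coe_filter]; rfl
  rw [hset, Set.ncard_coe_finset, le_div_iff₀ hc, mul_comm]
  exact (mul_card_hasRightWitness_le hc.le 1 hΔ).trans hsum

/-- **One-sided covering/counting argument**: if `Δ₁, …, Δ_d ≥ 0` sum to at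
most `E`, then the number of indices `j ∈ {1,…,d}` admitting a right witness
interval `[j, b] ⊆ [1, d]` with `∑_{i=j}^{b} Δᵢ > c·(b − j + 1)` is at most
`E / c`. -/
theorem right_witness_covering (d : ℕ) (hd : 1 ≤ d)
    (Δ : ℕ → ℝ) (hΔ : ∀ j ∈ Finset.Icc 1 d, 0 ≤ Δ j)
    (E : ℝ) (hsum : ∑ j ∈ Finset.Icc 1 d, Δ j ≤ E)
    (c : ℝ) (hc : 0 < c) :
    (({j | j ∈ Finset.Icc 1 d ∧ ∃ b : ℕ, j ≤ b ∧ b ≤ d ∧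
        c * ((b : ℝ) - j + 1) < ∑ i ∈ Finset.Icc j b, Δ i}.ncard : ℝ)) ≤ E / c :=
  right_witness_covering_general d Δ hΔ E hsum c hc
end

section
/- Let n ≥ 1 be an integer, let θ ∈ (0,1], and let S ⊆ {1,…,n} be a set of at most n' 'corrupted' indices. Call an index i ∈ {1,…,n} θ-locally good (with respect to S) if for every integer r ≥ 0, at most a θ-fraction of the indices in {i, i+1, …, min(i+r, n)} lie in S and at most a θ-fraction of the indices in {max(i−r, 1), …, i} lie in S. Then at least n − 2n'/θ indices of {1,…,n} are θ-locally good. -/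
/-!
An index `i` that is not locally good on the right comes with a window `[i, j]` in which `S` has
density more than `θ`. Take the leftmost such index, keep its window, discard the bad indices it
covers and recurse beyond `j`: the windows kept are disjoint, cover every right-bad index and each
holds more than `θ` times its length in `S`, so there are at most `#S / θ` right-bad indices.
The left-bad indices are the right-bad indices of the order dual, giving `2 n' / θ` bad indices.
-/

open Finset

theorem card_le_of_forall_exists_dense_Icc {α : Type*} [LinearOrder α] [LocallyFiniteOrder α]
    {θ : ℝ} (hθ : 0 ≤ θ) {S B : Finset α}
    (h : ∀ i ∈ B, ∃ j, θ * #(Icc i j) < #(S ∩ Icc i j)) : θ * #B ≤ #S := by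
  induction B using Finset.strongInduction generalizing S with
  | H B ih =>
  rcases B.eq_empty_or_nonempty with rfl | hB
  · simp
  obtain ⟨j, hj⟩ := h _ (B.min'_mem hB)
  set i := B.min' hB
  have hij : i ≤ j := by
    by_contra! hji
    simp [Icc_eq_empty_of_lt hji] at hj
  have hrest : θ * #(B.filter (j < ·)) ≤ #(S.filter (j < ·)) := by
    refine ih _ (filter_ssubset.2 ⟨i, B.min'_mem hB, hij.not_gt⟩) fun x hx => ?_
    obtain ⟨y, hy⟩ := h x (mem_filter.1 hx).1
    refine ⟨y, ?_⟩
    rwa [filter_inter, filter_true_of_mem fun z hz => (mem_filter.1 hx).2.trans_le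
      (mem_Icc.1 (mem_inter.1 hz).2).1]
  have hfirst : θ * #(B.filter (¬ j < ·)) ≤ #(S.filter (¬ j < ·)) := calc
    θ * #(B.filter (¬ j < ·)) ≤ θ * #(Icc i j) := by
      gcongr
      intro x hx
      rw [mem_filter] at hx
      exact mem_Icc.2 ⟨B.min'_le x hx.1, not_lt.1 hx.2⟩
    _ ≤ #(S ∩ Icc i j) := hj.le
    _ ≤ #(S.filter (¬ j < ·)) := by
      gcongr
      intro x hx
      rw [mem_inter, mem_Icc] at hx
      exact mem_filter.2 ⟨hx.1, not_lt.2 hx.2.2⟩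
  rw [← card_filter_add_card_filter_not (s := B) (j < ·),
    ← card_filter_add_card_filter_not (s := S) (j < ·)]
  push_cast
  linarith

theorem card_le_of_forall_exists_dense_Icc_left {α : Type*} [LinearOrder α] [LocallyFiniteOrder α]
    {θ : ℝ} (hθ : 0 ≤ θ) {S B : Finset α}
    (h : ∀ i ∈ B, ∃ j, θ * #(Icc j i) < #(S ∩ Icc j i)) : θ * #B ≤ #S :=
  -- `Icc (toDual i) (toDual j)` is definitionally `Icc j i`.
  card_le_of_forall_exists_dense_Icc (α := αᵒᵈ) hθ (S := S) (B := B) h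

theorem locally_good_indices_general (n : ℕ)
    (θ : ℝ) (hθ0 : 0 < θ)
    (S : Finset ℕ)
    (n' : ℝ) (hn' : (S.card : ℝ) ≤ n') :
    (n : ℝ) - 2 * n' / θ ≤
      (({i | i ∈ Finset.Icc 1 n ∧ ∀ r : ℕ,
          ((S ∩ Finset.Icc i (min (i + r) n)).card : ℝ) ≤
            θ * ((Finset.Icc i (min (i + r) n)).card : ℝ) ∧
          ((S ∩ Finset.Icc (max (i - r) 1) i).card : ℝ) ≤
            θ * ((Finset.Icc (max (i - r) 1) i).card : ℝ)}.ncard : ℝ)) := by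
  classical
  set good := (Icc 1 n).filter fun i => ∀ r : ℕ,
    (#(S ∩ Icc i (min (i + r) n)) : ℝ) ≤ θ * #(Icc i (min (i + r) n)) ∧
    (#(S ∩ Icc (max (i - r) 1) i) : ℝ) ≤ θ * #(Icc (max (i - r) 1) i)
  set rightBad := (Icc 1 n).filter fun i => ∃ r : ℕ,
    θ * #(Icc i (min (i + r) n)) < #(S ∩ Icc i (min (i + r) n))
  set leftBad := (Icc 1 n).filter fun i => ∃ r : ℕ,
    θ * #(Icc (max (i - r) 1) i) < #(S ∩ Icc (max (i - r) 1) i)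
  have hright : θ * #rightBad ≤ #S := card_le_of_forall_exists_dense_Icc hθ0.le fun i hi =>
    let ⟨_, hr⟩ := (mem_filter.1 hi).2; ⟨_, hr⟩
  have hleft : θ * #leftBad ≤ #S := card_le_of_forall_exists_dense_Icc_left hθ0.le fun i hi =>
    let ⟨_, hr⟩ := (mem_filter.1 hi).2; ⟨_, hr⟩
  have hbad : Icc 1 n \ good = rightBad ∪ leftBad := by
    rw [sdiff_eq_filter, ← filter_or]
    refine filter_congr fun i hi => ?_
    simp only [good, mem_filter, hi, true_and, not_forall, not_and_or, not_le, exists_or]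
  have hcount : n ≤ #good + (#rightBad + #leftBad) := calc
    n = #(Icc 1 n) := by simp
    _ ≤ #(Icc 1 n \ good) + #good := card_le_card_sdiff_add_card
    _ ≤ #good + (#rightBad + #leftBad) := by grw [hbad, card_union_le, add_comm]
  have hbadCard : (#rightBad + #leftBad : ℝ) ≤ 2 * n' / θ := by
    rw [le_div_iff₀ hθ0]; linarith
  have hgood : (good : Set ℕ).ncard = #good := Set.ncard_coe_finset good
  rw [coe_filter] at hgood
  rw [hgood]
  have : (n : ℝ) ≤ #good + (#rightBad + #leftBad) := by exact_mod_cast hcount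
  linarith

/-- **Locally good indices in a nearly sorted array** (EGS75): if at most `n'`
of the indices `{1,…,n}` are corrupted (lie in `S`), then at least
`n − 2n'/θ` indices `i` are `θ`-locally good, i.e. for every `r ≥ 0` at most a
`θ`-fraction of the indices in `{i, …, min(i+r, n)}` lie in `S` and at most a
`θ`-fraction of the indices in `{max(i−r, 1), …, i}` lie in `S`. -/
theorem locally_good_indices (n : ℕ) (hn : 1 ≤ n)
    (θ : ℝ) (hθ0 : 0 < θ) (hθ1 : θ ≤ 1)
    (S : Finset ℕ) (hS : S ⊆ Finset.Icc 1 n)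
    (n' : ℝ) (hn' : (S.card : ℝ) ≤ n') :
    (n : ℝ) - 2 * n' / θ ≤
      (({i | i ∈ Finset.Icc 1 n ∧ ∀ r : ℕ,
          ((S ∩ Finset.Icc i (min (i + r) n)).card : ℝ) ≤
            θ * ((Finset.Icc i (min (i + r) n)).card : ℝ) ∧
          ((S ∩ Finset.Icc (max (i - r) 1) i).card : ℝ) ≤
            θ * ((Finset.Icc (max (i - r) 1) i).card : ℝ)}.ncard : ℝ)) :=
  locally_good_indices_general n θ hθ0 S n' hn'
end

section
/- Let D ≥ 1 be an integer and let τ > 0, β ≥ 2, γ ∈ (0, 1/12], θ ∈ (0, 1/50) be reals. Let Δ_1, …, Δ_D be reals with s_j := βτ + Δ_j ≥ 0 for every j and ∑_{j=1}^{D} |Δ_j| ≤ γDτ. Let Good ⊆ {1,…,D} be a set of blocks with |{1,…,D} \ Good| ≤ θD, and let m_1, …, m_D be reals with 0 ≤ m_j ≤ s_j for every j (the number of mismatched positions in block j) such that m_j ≤ γ·s_j for every j ∈ Good. Then the overall mismatch fraction satisfies ∑_{j=1}^{D} m_j ≤ (γ + θ + γ/β)·∑_{j=1}^{D} s_j. 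-/
/-!
Splitting the blocks into good and bad ones, the total mismatch is at most `γ S + (1 - γ) B`,
where `S` is the total size and `B` the total size of the bad blocks. Since the sizes deviate
from `βτ` by at most `γDτ` in total, `B ≤ (θβ + γ) Dτ` and `S ≥ (β - γ) Dτ`, and
`(1 - γ)(θβ + γ) ≤ (θ + γ/β)(β - γ)` turns the first bound into the second.
-/

open Finset

lemma abs_sum_add_sub_card_mul_le {ι : Type*} (t : Finset ι) (c : ℝ) (Δ : ι → ℝ) :
    |∑ j ∈ t, (c + Δ j) - #t * c| ≤ ∑ j ∈ t, |Δ j| := by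
  rw [sum_add_distrib, sum_const, nsmul_eq_mul, add_sub_cancel_left]
  exact abs_sum_le_sum_abs Δ t

lemma sum_le_mul_sum_add_one_sub_mul_sum_sdiff {ι : Type*} [Fintype ι] [DecidableEq ι]
    (γ : ℝ) (s m : ι → ℝ) (good : Finset ι) (hm : ∀ j, m j ≤ s j)
    (hmgood : ∀ j ∈ good, m j ≤ γ * s j) :
    ∑ j, m j ≤ γ * ∑ j, s j + (1 - γ) * ∑ j ∈ univ \ good, s j := by
  have hsplit (f : ι → ℝ) : ∑ j ∈ univ \ good, f j + ∑ j ∈ good, f j = ∑ j, f j :=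
    sum_sdiff (subset_univ good)
  have hbad : ∑ j ∈ univ \ good, m j ≤ ∑ j ∈ univ \ good, s j := sum_le_sum fun j _ => hm j
  have hgood : ∑ j ∈ good, m j ≤ γ * ∑ j ∈ good, s j := by
    rw [mul_sum]
    exact sum_le_sum hmgood
  have hregroup : γ * ∑ j, s j + (1 - γ) * ∑ j ∈ univ \ good, s j
      = ∑ j ∈ univ \ good, s j + γ * ∑ j ∈ good, s j := by
    rw [← hsplit s]
    ring
  linarith [hsplit m]

lemma one_sub_mul_add_le_add_div_mul_sub {β γ θ : ℝ} (hβ : 1 ≤ β) (hγ : 0 ≤ γ) (hθ : 0 ≤ θ) :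
    (1 - γ) * (θ * β + γ) ≤ (θ + γ / β) * (β - γ) := by
  have hβ0 : β ≠ 0 := by positivity
  have hrw : (θ + γ / β) * (β - γ) = (1 - γ / β) * (θ * β + γ) := by
    field_simp
  rw [hrw]
  gcongr
  exact div_le_self hγ hβ

theorem boundary_oblivious_sampling_general (D : ℕ)
    (τ β γ θ : ℝ) (hτ : 0 < τ) (hβ : 2 ≤ β)
    (hγ0 : 0 < γ) (hγ1 : γ ≤ 1 / 12) (hθ0 : 0 < θ)
    (Δ m : Fin D → ℝ)
    (hdev : ∑ j, |Δ j| ≤ γ * D * τ)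
    (Good : Finset (Fin D)) (hGood : ((Finset.univ \ Good).card : ℝ) ≤ θ * D)
    (hm1 : ∀ j, m j ≤ β * τ + Δ j)
    (hmGood : ∀ j ∈ Good, m j ≤ γ * (β * τ + Δ j)) :
    ∑ j, m j ≤ (γ + θ + γ / β) * ∑ j, (β * τ + Δ j) := by
  set S := ∑ j, (β * τ + Δ j)
  set B := ∑ j ∈ univ \ Good, (β * τ + Δ j)
  have hS : (β - γ) * (D * τ) ≤ S := by
    have := (abs_le.mp (abs_sum_add_sub_card_mul_le univ (β * τ) Δ)).1
    rw [card_univ, Fintype.card_fin] at this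
    linarith
  have hB : B ≤ (θ * β + γ) * (D * τ) := by
    have hdev_bad : ∑ j ∈ univ \ Good, |Δ j| ≤ ∑ j, |Δ j| :=
      sum_le_univ_sum_of_nonneg fun j => abs_nonneg _
    have hcard : (#(univ \ Good) : ℝ) * (β * τ) ≤ θ * D * (β * τ) := by gcongr
    linarith [(abs_le.mp (abs_sum_add_sub_card_mul_le (univ \ Good) (β * τ) Δ)).2]
  have hcoef := one_sub_mul_add_le_add_div_mul_sub (β := β) (by linarith) hγ0.le hθ0.le
  calc ∑ j, m j ≤ γ * S + (1 - γ) * B :=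
        sum_le_mul_sum_add_one_sub_mul_sum_sdiff γ _ m Good hm1 hmGood
    _ ≤ γ * S + (1 - γ) * ((θ * β + γ) * (D * τ)) := by gcongr; linarith
    _ ≤ γ * S + (θ + γ / β) * ((β - γ) * (D * τ)) := by
        linarith [mul_le_mul_of_nonneg_right hcoef (by positivity : (0 : ℝ) ≤ D * τ)]
    _ ≤ γ * S + (θ + γ / β) * S := by gcongr
    _ = (γ + θ + γ / β) * S := by ring

/-- **Boundary-oblivious sampling** (abstract form of Lemma 25): given `D`
consecutive blocks of sizes `sⱼ = βτ + Δⱼ ≥ 0` with `∑ⱼ |Δⱼ| ≤ γDτ`, where all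
but at most `θD` blocks are good, and where on each good block the number of
mismatched positions `mⱼ` is at most `γ sⱼ` (while always `0 ≤ mⱼ ≤ sⱼ`), the
total mismatch is at most a `(γ + θ + γ/β)`-fraction of the total size. -/
theorem boundary_oblivious_sampling (D : ℕ) (hD : 1 ≤ D)
    (τ β γ θ : ℝ) (hτ : 0 < τ) (hβ : 2 ≤ β)
    (hγ0 : 0 < γ) (hγ1 : γ ≤ 1 / 12) (hθ0 : 0 < θ) (hθ1 : θ < 1 / 50)
    (Δ m : Fin D → ℝ) (hpos : ∀ j, 0 ≤ β * τ + Δ j)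
    (hdev : ∑ j, |Δ j| ≤ γ * D * τ)
    (Good : Finset (Fin D)) (hGood : ((Finset.univ \ Good).card : ℝ) ≤ θ * D)
    (hm0 : ∀ j, 0 ≤ m j) (hm1 : ∀ j, m j ≤ β * τ + Δ j)
    (hmGood : ∀ j ∈ Good, m j ≤ γ * (β * τ + Δ j)) :
    ∑ j, m j ≤ (γ + θ + γ / β) * ∑ j, (β * τ + Δ j) :=
  boundary_oblivious_sampling_general D τ β γ θ hτ hβ hγ0 hγ1 hθ0 Δ m hdev Good hGood hm1 hmGood
end

section
/- Let L < R be integers and let τ > 0 and 0 < αγ ≤ γ < β be reals with (β+γ)/(β−γ) < 4/3, and set ρ = min{ (1/4)·(β−γ)/(β+γ), 1 − (3/4)·(β+γ)/(β−γ) } (which is positive). Let p_L < p_{L+1} < ⋯ < p_R be reals with (β−αγ)τ ≤ p_{j+1} − p_j ≤ (β+αγ)τ for all L ≤ j ≤ R−1 (the block boundaries). Let l, r be reals with p_L ≤ l < p_{L+1}, p_{R−1} < r ≤ p_R, and r − l ≥ 18(β+γ)τ. Define m_1 = (1−ρ)l + ρr and m_2 = ρl + (1−ρ)r, and let M_1,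 M_2 be the integers with p_{M_1} ≤ m_1 < p_{M_1+1} and p_{M_2−1} < m_2 ≤ p_{M_2}. Then M_1 ≤ L + (R−L)/3 and M_2 ≥ L + 2(R−L)/3. -/
/-!
Every block has size between `a = (β - γ)τ` and `b = (β + γ)τ`, so telescoping over blocks turns
positions into block counts. The blocks from `L` up to `M₁` fit inside `[p_L, m₁]`, whose length is
at most `ρ(r - l) + b`; since `r - l ≤ (R - L) b` and `ρ ≤ a / (4b)`, this is at most
`(R - L) a / 4 + b`, while `M₁ - L` blocks have length at least `(M₁ - L) a`. As `3b < 4a` and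
`R - L ≥ 16`, this forces `M₁ - L ≤ (R - L) / 3`. The bound on `M₂` is the mirror image.
-/

section Telescoping

variable {p : ℤ → ℝ} {L R i k : ℤ}

theorem sub_le_mul_of_forall_sub_le {b : ℝ} (h : ∀ j, L ≤ j → j < R → p (j + 1) - p j ≤ b)
    (hi : L ≤ i) (hik : i ≤ k) (hk : k ≤ R) : p k - p i ≤ (k - i) * b := by
  induction k, hik using Int.leInduction with
  | base => simp
  | succ k hik ih =>
    have hstep := h k (hi.trans hik) (by omega)
    have hprev := ih (by omega)
    push_cast
    linarith

theorem mul_le_sub_of_forall_le_sub {a : ℝ} (h : ∀ j, L ≤ j → j < R → a ≤ p (j + 1) - p j)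
    (hi : L ≤ i) (hik : i ≤ k) (hk : k ≤ R) : (k - i) * a ≤ p k - p i := by
  have := sub_le_mul_of_forall_sub_le (p := fun j ↦ -p j) (b := -a)
    (fun j hLj hjR ↦ by linarith [h j hLj hjR]) hi hik hk
  linarith

theorem index_sub_le_third_of_sub_le {a b : ℝ}
    (h : ∀ j, L ≤ j → j < R → a ≤ p (j + 1) - p j) (ha : 0 < a) (hab : 3 * b < 4 * a)
    (hLR : 16 ≤ (R - L : ℝ)) (hi : L ≤ i) (hik : i ≤ k) (hk : k ≤ R)
    (hgap : p k - p i ≤ (R - L) * a / 4 + b) : (k - i : ℝ) ≤ (R - L) / 3 := by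
  have hblocks := mul_le_sub_of_forall_le_sub h hi hik hk
  refine le_of_mul_le_mul_right ?_ ha
  nlinarith

end Telescoping

theorem middle_subinterval_avoids_outer_thirds_general
    (L R : ℤ)
    (τ α γ β : ℝ) (hτ : 0 < τ) (hαγ0 : 0 < α * γ) (hαγ : α * γ ≤ γ) (hγβ : γ < β)
    (hratio : (β + γ) / (β - γ) < 4 / 3)
    (ρ : ℝ)
    (hρ : ρ = min ((1 / 4) * ((β - γ) / (β + γ))) (1 - (3 / 4) * ((β + γ) / (β - γ))))
    (p : ℤ → ℝ)
    (hp : ∀ j : ℤ, L ≤ j → j ≤ R - 1 →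
      (β - α * γ) * τ ≤ p (j + 1) - p j ∧ p (j + 1) - p j ≤ (β + α * γ) * τ)
    (l r : ℝ) (hl1 : p L ≤ l) (hl2 : l < p (L + 1))
    (hr1 : p (R - 1) < r) (hr2 : r ≤ p R)
    (hlen : 18 * (β + γ) * τ ≤ r - l)
    (m₁ m₂ : ℝ) (hm₁ : m₁ = (1 - ρ) * l + ρ * r) (hm₂ : m₂ = ρ * l + (1 - ρ) * r)
    (M₁ M₂ : ℤ)
    (hM₁range : L ≤ M₁ ∧ M₁ ≤ R - 1) (hM₂range : L + 1 ≤ M₂ ∧ M₂ ≤ R)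
    (hM₁ : p M₁ ≤ m₁ ∧ m₁ < p (M₁ + 1))
    (hM₂ : p (M₂ - 1) < m₂ ∧ m₂ ≤ p M₂) :
    (M₁ : ℝ) ≤ (L : ℝ) + ((R : ℝ) - L) / 3 ∧
      (L : ℝ) + 2 * ((R : ℝ) - L) / 3 ≤ (M₂ : ℝ) := by
  obtain ⟨hLM₁, hM₁R⟩ := hM₁range
  obtain ⟨hLM₂, hM₂R⟩ := hM₂range
  have hγ : 0 < γ := hαγ0.trans_le hαγ
  have hsub : 0 < β - γ := by linarith
  have hadd : 0 < β + γ := by linarith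
  have hsize : ∀ j, L ≤ j → j < R →
      (β - γ) * τ ≤ p (j + 1) - p j ∧ p (j + 1) - p j ≤ (β + γ) * τ := fun j hLj hjR ↦ by
    obtain ⟨hlo, hhi⟩ := hp j hLj (by omega)
    constructor <;> nlinarith
  have hab : 3 * ((β + γ) * τ) < 4 * ((β - γ) * τ) := by
    rw [div_lt_iff₀ hsub] at hratio
    nlinarith
  have hrl : r - l ≤ (R - L) * ((β + γ) * τ) := by
    linarith [sub_le_mul_of_forall_sub_le (fun j hLj hjR ↦ (hsize j hLj hjR).2) le_rfl
      (show L ≤ R by omega) le_rfl]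
  have hLR : 16 ≤ (R - L : ℝ) := by
    have : 18 * ((β + γ) * τ) ≤ (R - L) * ((β + γ) * τ) := by linarith
    linarith [le_of_mul_le_mul_right this (by positivity)]
  have hρrl : ρ * (r - l) ≤ (R - L) * ((β - γ) * τ) / 4 := calc
    ρ * (r - l) ≤ 1 / 4 * ((β - γ) / (β + γ)) * ((R - L) * ((β + γ) * τ)) :=
      mul_le_mul (hρ ▸ min_le_left _ _) hrl (le_trans (by positivity) hlen) (by positivity)
    _ = (R - L) * ((β - γ) * τ) / 4 := by field_simp
  have hthird := fun {i k : ℤ} ↦ index_sub_le_third_of_sub_le (i := i) (k := k)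
    (fun j hLj hjR ↦ (hsize j hLj hjR).1) (by positivity) hab hLR
  constructor
  · have hfirst := (hsize L le_rfl (by omega)).2
    have := hthird le_rfl hLM₁ (by omega) (by linarith [hM₁.1])
    linarith
  · have hlast := (hsize (R - 1) (by omega) (by omega)).2
    rw [sub_add_cancel] at hlast
    have := hthird (by omega) hM₂R le_rfl (by linarith [hM₂.2])
    linarith

/-- **The middle subinterval avoids the outer thirds** (Lemma 26, item (1)).
Blocks `L, …, R−1` of a corrupted codeword occupy positions `[p_j, p_{j+1})`
with block sizes in `[(β−αγ)τ, (β+αγ)τ]`; the interval `[l, r)` has closure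
consisting of blocks `L` through `R−1` and length at least `18(β+γ)τ`.
With `ρ = min{(1/4)(β−γ)/(β+γ), 1 − (3/4)(β+γ)/(β−γ)}`,
`m₁ = (1−ρ)l + ρr` and `m₂ = ρl + (1−ρ)r`, if `M₁` and `M₂` are the block
indices with `p_{M₁} ≤ m₁ < p_{M₁+1}` and `p_{M₂−1} < m₂ ≤ p_{M₂}`, then
`M₁ ≤ L + (R−L)/3` and `M₂ ≥ L + 2(R−L)/3`. -/
theorem middle_subinterval_avoids_outer_thirds
    (L R : ℤ) (hLR : L < R)
    (τ α γ β : ℝ) (hτ : 0 < τ) (hαγ0 : 0 < α * γ) (hαγ : α * γ ≤ γ) (hγβ : γ < β)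
    (hratio : (β + γ) / (β - γ) < 4 / 3)
    (ρ : ℝ)
    (hρ : ρ = min ((1 / 4) * ((β - γ) / (β + γ))) (1 - (3 / 4) * ((β + γ) / (β - γ))))
    (p : ℤ → ℝ)
    (hp : ∀ j : ℤ, L ≤ j → j ≤ R - 1 →
      (β - α * γ) * τ ≤ p (j + 1) - p j ∧ p (j + 1) - p j ≤ (β + α * γ) * τ)
    (l r : ℝ) (hl1 : p L ≤ l) (hl2 : l < p (L + 1))
    (hr1 : p (R - 1) < r) (hr2 : r ≤ p R)
    (hlen : 18 * (β + γ) * τ ≤ r - l)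
    (m₁ m₂ : ℝ) (hm₁ : m₁ = (1 - ρ) * l + ρ * r) (hm₂ : m₂ = ρ * l + (1 - ρ) * r)
    (M₁ M₂ : ℤ)
    (hM₁range : L ≤ M₁ ∧ M₁ ≤ R - 1) (hM₂range : L + 1 ≤ M₂ ∧ M₂ ≤ R)
    (hM₁ : p M₁ ≤ m₁ ∧ m₁ < p (M₁ + 1))
    (hM₂ : p (M₂ - 1) < m₂ ∧ m₂ ≤ p M₂) :
    (M₁ : ℝ) ≤ (L : ℝ) + ((R : ℝ) - L) / 3 ∧
      (L : ℝ) + 2 * ((R : ℝ) - L) / 3 ≤ (M₂ : ℝ) :=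
  middle_subinterval_avoids_outer_thirds_general L R τ α γ β hτ hαγ0 hαγ hγβ hratio ρ hρ p hp l r
    hl1 hl2 hr1 hr2 hlen m₁ m₂ hm₁ hm₂ M₁ M₂ hM₁range hM₂range hM₁ hM₂
end

section
/- There exist a constant integer β_in ≥ 1 and a constant real δ_in > 0 such that for all sufficiently large integers t there exist maps Enc : {0,1}^t → {0,1}^{β_in·t} and Dec : {0,1}^* → {0,1}^t ∪ {⊥} with the following properties: (1) for every x ∈ {0,1}^t and every binary string w with ED(w, Enc(x)) ≤ δ_in·2·β_in·t, one has Dec(w) = x (equivalently, for all distinct x, x' ∈ {0,1}^t, ED(Enc(x), Enc(x')) > 4·δ_in·β_in·t); and (2) for every x ∈ {0,1}^t, every contiguous substring of Enc(x) of length ⌈2·log₂ t⌉ has fractional Hamming weight at least 2/5 (i.e., at least a 2/5-fraction of its bits equal 1). -/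
/-- Cost structure for Levenshtein distance (removed from Mathlib; restored with its old meaning). -/
structure Levenshtein.Cost (α β δ : Type*) where
  delete : α → δ
  insert : β → δ
  substitute : α → β → δ

/-- Levenshtein distance with cost `C` (removed from Mathlib; restored with its old meaning,
given by the same recursion the old `levenshtein_cons_cons` etc. lemmas characterized). -/
def levenshtein {α β δ : Type*} [AddZeroClass δ] [Min δ] (C : Levenshtein.Cost α β δ) :
    List α → List β → δ
  | [], [] => 0
  | x :: xs, [] => C.delete x + levenshtein C xs []
  | [], y :: ys => C.insert y + levenshtein C [] ys
  | x :: xs, y :: ys =>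
    min (C.delete x + levenshtein C xs (y :: ys))
      (min (C.insert y + levenshtein C (x :: xs) ys) (C.substitute x y + levenshtein C xs ys))

/-- The insertion-deletion edit distance between two lists: the Levenshtein
distance where insertions and deletions cost `1` and substitutions cost `2`. -/
def insDelCost (α : Type*) [DecidableEq α] : Levenshtein.Cost α α ℕ where
  delete _ := 1
  insert _ := 1
  substitute a b := if a = b then 0 else 2

/-- `ED x y` is the minimum number of single-symbol insertions and deletions
needed to transform `x` into `y`. -/
def ED {A : Type*} [DecidableEq A] (x y : List A) : ℕ :=
  levenshtein (insDelCost A) x y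

/-!
Codewords are chosen among the words `interleaveTrue y` (every bit of `y` preceded by a `true`):
they never contain two consecutive `false`s, so every window of length `ℓ ≥ 5` is at least
`2/5` ones. Two words of length `n` that are both within edit distance `D` of some word share a
sublist of length `n - D`, and a fixed word of length `n` shares one with at most
`C(n, D)² 2^D` words of length `n`. For `n = 4t` and `D = t/32` this is at most `2^t`, so a
greedy choice among the `2^(2t)` interleaved words yields `2^t` codewords, no two of which share
a sublist of length `n - D`; this is exactly unique decodability within edit distance `D`.
-/

open List

namespace ED

variable {α : Type*} [DecidableEq α]

theorem nil_left (v : List α) : ED [] v = v.length := by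
  induction v with
  | nil => simp [ED, levenshtein]
  | cons b v ih =>
    rw [ED, levenshtein, ← ED, ih]
    simp [insDelCost, add_comm]

theorem nil_right (u : List α) : ED u [] = u.length := by
  induction u with
  | nil => simp [ED, levenshtein]
  | cons a u ih =>
    rw [ED, levenshtein, ← ED, ih]
    simp [insDelCost, add_comm]

theorem cons_cons (a b : α) (u v : List α) :
    ED (a :: u) (b :: v) =
      min (1 + ED u (b :: v)) (min (1 + ED (a :: u) v) ((if a = b then 0 else 2) + ED u v)) := by
  rw [ED, levenshtein]
  rfl

theorem exists_common_sublist (u v : List α) :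
    ∃ c, c <+ u ∧ c <+ v ∧ u.length + v.length ≤ 2 * c.length + ED u v := by
  induction u generalizing v with
  | nil => exact ⟨[], .refl _, nil_sublist _, by simp [nil_left]⟩
  | cons a u ihu =>
    induction v with
    | nil => exact ⟨[], nil_sublist _, .refl _, by simp [nil_right]⟩
    | cons b v ihv =>
      rw [cons_cons]
      obtain ⟨c₁, hc₁u, hc₁v, h₁⟩ := ihu (b :: v)
      obtain ⟨c₂, hc₂u, hc₂v, h₂⟩ := ihv
      obtain ⟨c₃, hc₃u, hc₃v, h₃⟩ := ihu v
      simp only [length_cons] at *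
      rcases min_choice (1 + ED u (b :: v))
          (min (1 + ED (a :: u) v) ((if a = b then 0 else 2) + ED u v)) with h | h <;> rw [h]
      · exact ⟨c₁, hc₁u.cons a, hc₁v, by omega⟩
      rcases min_choice (1 + ED (a :: u) v) ((if a = b then 0 else 2) + ED u v) with h | h <;>
        rw [h]
      · exact ⟨c₂, hc₂u, hc₂v.cons b, by omega⟩
      split_ifs with hab
      · subst hab
        exact ⟨a :: c₃, hc₃u.cons_cons a, hc₃v.cons_cons a, by simp only [length_cons]; omega⟩
      · exact ⟨c₃, hc₃u.cons a, hc₃v.cons b, by omega⟩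

end ED

section CommonSublist

variable {α : Type*}

theorem List.Sublist.exists_common_sublist {c d w : List α} (hc : c <+ w) (hd : d <+ w) :
    ∃ e, e <+ c ∧ e <+ d ∧ c.length + d.length ≤ w.length + e.length := by
  induction w generalizing c d with
  | nil =>
    obtain rfl := sublist_nil.1 hc
    obtain rfl := sublist_nil.1 hd
    exact ⟨[], .refl _, nil_sublist _, by simp⟩
  | cons a w ih =>
    rcases sublist_cons_iff.1 hc with hc' | ⟨c, rfl, hc'⟩ <;>
      rcases sublist_cons_iff.1 hd with hd' | ⟨d, rfl, hd'⟩ <;>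
      obtain ⟨e, hec, hed, h⟩ := ih hc' hd'
    · exact ⟨e, hec, hed, by simp only [length_cons]; omega⟩
    · exact ⟨e, hec, hed.cons a, by simp only [length_cons]; omega⟩
    · exact ⟨e, hec.cons a, hed, by simp only [length_cons]; omega⟩
    · exact ⟨a :: e, hec.cons_cons a, hed.cons_cons a, by simp only [length_cons]; omega⟩

def HasCommonSublist (k : ℕ) (u v : List α) : Prop :=
  ∃ e, e <+ u ∧ e <+ v ∧ e.length = k

theorem HasCommonSublist.symm {k : ℕ} {u v : List α} (h : HasCommonSublist k u v) :
    HasCommonSublist k v u :=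
  let ⟨e, hu, hv, he⟩ := h
  ⟨e, hv, hu, he⟩

theorem HasCommonSublist.of_le {k : ℕ} {u v e : List α} (hu : e <+ u) (hv : e <+ v)
    (hk : k ≤ e.length) : HasCommonSublist k u v :=
  ⟨e.take k, (take_sublist _ _).trans hu, (take_sublist _ _).trans hv, length_take_of_le hk⟩

theorem hasCommonSublist_self {k : ℕ} {u : List α} (hk : k ≤ u.length) :
    HasCommonSublist k u u :=
  .of_le (.refl u) (.refl u) hk

theorem hasCommonSublist_of_ED_le [DecidableEq α] {n D : ℕ} {w u v : List α}
    (hu : u.length = n) (hv : v.length = n) (hwu : ED w u ≤ D) (hwv : ED w v ≤ D) :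
    HasCommonSublist (n - D) u v := by
  obtain ⟨c, hcw, hcu, hc⟩ := ED.exists_common_sublist w u
  obtain ⟨d, hdw, hdv, hd⟩ := ED.exists_common_sublist w v
  obtain ⟨e, hec, hed, he⟩ := hcw.exists_common_sublist hdw
  exact .of_le (hec.trans hcu) (hed.trans hdv) (by omega)

end CommonSublist

section Counting

variable {α : Type*} [Fintype α]

variable (α) in
def listsOfLength (n : ℕ) : Finset (List α) :=
  (Finset.univ : Finset (Fin n → α)).map ⟨List.ofFn, List.ofFn_injective⟩

@[simp]
theorem mem_listsOfLength {n : ℕ} {l : List α} : l ∈ listsOfLength α n ↔ l.length = n := by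
  refine ⟨fun hl => ?_, fun hl => ?_⟩
  · obtain ⟨f, -, rfl⟩ := Finset.mem_map.1 hl
    exact length_ofFn
  · subst hl
    exact Finset.mem_map.2 ⟨l.get, Finset.mem_univ _, ofFn_get l⟩

theorem card_listsOfLength (n : ℕ) : (listsOfLength α n).card = Fintype.card α ^ n := by
  simp [listsOfLength]

variable [DecidableEq α]

theorem card_filter_sublist_le (e : List α) (n : ℕ) :
    ((listsOfLength α n).filter (e <+ ·)).card ≤
      n.choose e.length * Fintype.card α ^ (n - e.length) := by
  induction n generalizing e with
  | zero => cases e <;> simp [Finset.filter_true_of_mem, card_listsOfLength]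
  | succ n ih =>
    cases e with
    | nil => simp [card_listsOfLength]
    | cons a e =>
      set q := Fintype.card α
      set k := e.length
      have hsub : (listsOfLength α (n + 1)).filter (a :: e <+ ·) ⊆
          (Finset.univ ×ˢ (listsOfLength α n).filter (a :: e <+ ·)).image (fun p => p.1 :: p.2) ∪
            ((listsOfLength α n).filter (e <+ ·)).image (a :: ·) := by
        intro v hv
        obtain ⟨hv, hev⟩ := Finset.mem_filter.1 hv
        obtain ⟨b, v, rfl⟩ := exists_cons_of_length_eq_add_one (mem_listsOfLength.1 hv)
        rcases sublist_cons_iff.1 hev with h | ⟨r, hr, h⟩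
        · exact Finset.mem_union_left _ (Finset.mem_image.2 ⟨(b, v), by simp_all, rfl⟩)
        · obtain ⟨rfl, rfl⟩ := cons_eq_cons.1 hr
          exact Finset.mem_union_right _ (Finset.mem_image.2 ⟨v, by simp_all, rfl⟩)
      have hshift :
          q * (n.choose (k + 1) * q ^ (n - (k + 1))) ≤ n.choose (k + 1) * q ^ (n - k) := by
        rcases lt_or_ge k n with hk | hk
        · rw [show n - k = n - (k + 1) + 1 by omega, pow_succ]
          exact (mul_left_comm _ _ _).le.trans (by rw [mul_comm q])
        · simp [Nat.choose_eq_zero_of_lt (Nat.lt_succ_of_le hk)]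
      calc _ ≤ _ := Finset.card_le_card hsub
        _ ≤ q * ((listsOfLength α n).filter (a :: e <+ ·)).card +
              ((listsOfLength α n).filter (e <+ ·)).card := by
          refine (Finset.card_union_le _ _).trans (add_le_add ?_ Finset.card_image_le)
          exact Finset.card_image_le.trans (by simp [q])
        _ ≤ q * (n.choose (k + 1) * q ^ (n - (k + 1))) + n.choose k * q ^ (n - k) :=
          add_le_add (Nat.mul_le_mul_left _ (ih _)) (ih _)
        _ ≤ (n + 1).choose (k + 1) * q ^ (n + 1 - (k + 1)) := by
          rw [Nat.choose_succ_succ', Nat.add_sub_add_right]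
          linarith

open scoped Classical in
theorem card_filter_hasCommonSublist_le (u : List α) (k : ℕ) :
    ((listsOfLength α u.length).filter (HasCommonSublist k u)).card ≤
      u.length.choose k ^ 2 * Fintype.card α ^ (u.length - k) := by
  have hsub : (listsOfLength α u.length).filter (HasCommonSublist k u) ⊆
      (sublistsLen k u).toFinset.biUnion fun e => (listsOfLength α u.length).filter (e <+ ·) := by
    intro v hv
    obtain ⟨hvn, e, heu, hev, rfl⟩ := Finset.mem_filter.1 hv
    exact Finset.mem_biUnion.2
      ⟨e, mem_toFinset.2 (mem_sublistsLen.2 ⟨heu, rfl⟩), Finset.mem_filter.2 ⟨hvn, hev⟩⟩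
  calc _ ≤ _ := Finset.card_le_card hsub
    _ ≤ (sublistsLen k u).toFinset.card *
          (u.length.choose k * Fintype.card α ^ (u.length - k)) := by
      refine Finset.card_biUnion_le_card_mul _ _ _ fun e he => ?_
      obtain ⟨-, rfl⟩ := mem_sublistsLen.1 (mem_toFinset.1 he)
      exact card_filter_sublist_le e _
    _ ≤ u.length.choose k * (u.length.choose k * Fintype.card α ^ (u.length - k)) := by
      gcongr
      exact (toFinset_card_le _).trans (length_sublistsLen k u).le
    _ = _ := by ring

end Counting

theorem Finset.exists_subset_card_eq_pairwise_not_rel {α : Type*} [DecidableEq α]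
    (R : α → α → Prop) [DecidableRel R] (S : Finset α) (hsymm : ∀ u ∈ S, ∀ v ∈ S, R u v → R v u)
    (hrefl : ∀ u ∈ S, R u u) {Δ : ℕ} (hΔ : 0 < Δ) (hdeg : ∀ u ∈ S, (S.filter (R u)).card ≤ Δ)
    {k : ℕ} (hk : k * Δ ≤ S.card) :
    ∃ T ⊆ S, T.card = k ∧ (T : Set α).Pairwise fun u v => ¬R u v := by
  induction k generalizing S with
  | zero => exact ⟨∅, Finset.empty_subset _, rfl, by simp⟩
  | succ k ih =>
    obtain ⟨u, hu⟩ := Finset.card_pos.1 (by nlinarith : 0 < S.card)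
    set S' := S.filter fun v => ¬R u v
    have hS'S : S' ⊆ S := Finset.filter_subset _ _
    have hS' : k * Δ ≤ S'.card := by
      have := Finset.card_filter_add_card_filter_not (s := S) (R u)
      linarith [hdeg u hu]
    obtain ⟨T, hTS', hTcard, hT⟩ := ih S' (fun v hv w hw => hsymm v (hS'S hv) w (hS'S hw))
      (fun v hv => hrefl v (hS'S hv))
      (fun v hv => (Finset.card_le_card (Finset.filter_subset_filter _ hS'S)).trans
        (hdeg v (hS'S hv))) hS'
    have hTu : ∀ v ∈ T, ¬R u v := fun v hv => (Finset.mem_filter.1 (hTS' hv)).2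
    have huT : u ∉ T := fun h => hTu u h (hrefl u hu)
    refine ⟨insert u T, Finset.insert_subset hu (hTS'.trans hS'S),
      by rw [Finset.card_insert_of_notMem huT, hTcard], ?_⟩
    rw [Finset.coe_insert, Set.pairwise_insert]
    exact ⟨hT, fun v hv _ => ⟨hTu v hv, fun h => hTu v hv
      (hsymm v (hS'S (hTS' hv)) u hu h)⟩⟩

theorem exists_decoder {β γ : Type*} (C : γ → β → Prop) (hC : ∀ w x y, C w x → C w y → x = y) :
    ∃ Dec : γ → Option β, ∀ w x, C w x → Dec w = some x := by
  classical
  refine ⟨fun w => if h : ∃ x, C w x then some h.choose else none, fun w x hx => ?_⟩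
  have h : ∃ x, C w x := ⟨x, hx⟩
  simp only [dif_pos h, hC w _ _ h.choose_spec hx]

section Interleave

def interleaveTrue : List Bool → List Bool
  | [] => []
  | b :: l => true :: b :: interleaveTrue l

theorem length_interleaveTrue (l : List Bool) : (interleaveTrue l).length = 2 * l.length := by
  induction l with
  | nil => rfl
  | cons b l ih => simp only [interleaveTrue, length_cons, ih]; ring

theorem interleaveTrue_injective : Function.Injective interleaveTrue := by
  intro l l' h
  induction l generalizing l' with
  | nil => cases l' with
    | nil => rfl
    | cons => simp [interleaveTrue] at h
  | cons b l ih => cases l' with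
    | nil => simp [interleaveTrue] at h
    | cons b' l' =>
      simp only [interleaveTrue, cons.injEq, true_and] at h
      rw [h.1, ih h.2]

theorem isChain_cons_interleaveTrue (b : Bool) (l : List Bool) :
    (b :: interleaveTrue l).IsChain fun a b => a = true ∨ b = true := by
  induction l generalizing b with
  | nil => exact isChain_singleton b
  | cons c l ih => exact isChain_cons_cons.2 ⟨.inr rfl, isChain_cons_cons.2 ⟨.inl rfl, ih c⟩⟩

theorem isChain_interleaveTrue (l : List Bool) :
    (interleaveTrue l).IsChain fun a b => a = true ∨ b = true := by
  cases l with
  | nil => exact isChain_nil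
  | cons b l => exact isChain_cons_interleaveTrue true (b :: l) |>.tail

end Interleave

theorem length_le_two_mul_count_true_add_one :
    ∀ {l : List Bool}, l.IsChain (fun a b => a = true ∨ b = true) →
      l.length ≤ 2 * l.count true + 1
  | [], _ => by simp
  | [_], _ => by simp
  | true :: l, h => by
    have := length_le_two_mul_count_true_add_one (l := l) h.tail
    simp only [length_cons, count_cons_self]
    omega
  | false :: true :: l, h => by
    have := length_le_two_mul_count_true_add_one (l := l) h.tail.tail
    simp only [length_cons, count_cons_self, count_cons_of_ne Bool.false_ne_true]
    omega
  | false :: false :: l, h => by simp at h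

theorem two_mul_le_five_mul_count_true_window {l : List Bool}
    (hl : l.IsChain fun a b => a = true ∨ b = true) {i ℓ : ℕ} (hℓ : 5 ≤ ℓ)
    (hi : i + ℓ ≤ l.length) : 2 * ℓ ≤ 5 * ((l.drop i).take ℓ).count true := by
  have hlen : ((l.drop i).take ℓ).length = ℓ := by simp only [length_take, length_drop]; omega
  have := length_le_two_mul_count_true_add_one ((hl.drop i).take ℓ)
  omega

theorem Nat.choose_mul_pow_le_one_add_pow (n k M : ℕ) : n.choose k * M ^ (n - k) ≤ (1 + M) ^ n := by
  rcases le_or_gt k n with hk | hk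
  · rw [add_pow]
    calc n.choose k * M ^ (n - k) = 1 ^ k * M ^ (n - k) * n.choose k := by ring
      _ ≤ _ := Finset.single_le_sum (f := fun m => 1 ^ m * M ^ (n - m) * n.choose m)
          (fun _ _ => Nat.zero_le _) (Finset.mem_range.2 (Nat.lt_succ_of_le hk))
  · simp [Nat.choose_eq_zero_of_lt hk]

theorem choose_four_mul_sq_mul_two_pow_le {t D : ℕ} (hD : 32 * D ≤ t) :
    (4 * t).choose D ^ 2 * 2 ^ D ≤ 2 ^ t := by
  set C := (4 * t).choose D
  have hC : C * 64 ^ (4 * t - D) ≤ 65 ^ (4 * t) := Nat.choose_mul_pow_le_one_add_pow _ _ 64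
  have h65 : 65 ^ (8 * t) * 2 ^ (13 * D) ≤ 2 ^ (49 * t) := by
    refine (Nat.pow_le_pow_iff_left two_ne_zero).1 ?_
    calc (65 ^ (8 * t) * 2 ^ (13 * D)) ^ 2 = 65 ^ (16 * t) * 2 ^ (26 * D) := by ring
      _ ≤ 65 ^ (16 * t) * 2 ^ t := by gcongr <;> omega
      _ = (65 ^ 16 * 2) ^ t := by rw [mul_pow, pow_mul]
      _ ≤ (2 ^ 98) ^ t := by gcongr; norm_num
      _ = (2 ^ (49 * t)) ^ 2 := by rw [← pow_mul, ← pow_mul]; ring_nf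
  have hP : (64 ^ (4 * t - D)) ^ 2 * 2 ^ (12 * D) = 2 ^ (48 * t) := by
    rw [show (64 : ℕ) = 2 ^ 6 by rfl, ← pow_mul, ← pow_mul, ← pow_add]
    congr 1
    omega
  refine Nat.le_of_mul_le_mul_right ?_ (by positivity : 0 < (64 ^ (4 * t - D)) ^ 2 * 2 ^ (12 * D))
  calc C ^ 2 * 2 ^ D * ((64 ^ (4 * t - D)) ^ 2 * 2 ^ (12 * D))
      = (C * 64 ^ (4 * t - D)) ^ 2 * 2 ^ (13 * D) := by ring
    _ ≤ (65 ^ (4 * t)) ^ 2 * 2 ^ (13 * D) := by gcongr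
    _ = 65 ^ (8 * t) * 2 ^ (13 * D) := by ring
    _ ≤ 2 ^ (49 * t) := h65
    _ = 2 ^ t * ((64 ^ (4 * t - D)) ^ 2 * 2 ^ (12 * D)) := by rw [hP, ← pow_add]; ring_nf

theorem exists_interleaveTrue_code {t D : ℕ} (hD : 32 * D ≤ t) :
    ∃ T : Finset (List Bool), T.card = 2 ^ t ∧
      (∀ v ∈ T, v.length = 4 * t ∧ v.IsChain fun a b => a = true ∨ b = true) ∧
      (T : Set (List Bool)).Pairwise fun u v => ¬HasCommonSublist (4 * t - D) u v := by
  classical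
  set S := (listsOfLength Bool (2 * t)).image interleaveTrue
  have hS : ∀ v ∈ S, v.length = 4 * t ∧ v.IsChain fun a b => a = true ∨ b = true := by
    intro v hv
    obtain ⟨y, hy, rfl⟩ := Finset.mem_image.1 hv
    rw [length_interleaveTrue, mem_listsOfLength.1 hy]
    exact ⟨by ring, isChain_interleaveTrue y⟩
  have hcard : S.card = 2 ^ t * 2 ^ t := by
    rw [Finset.card_image_of_injective _ interleaveTrue_injective, card_listsOfLength,
      Fintype.card_bool, two_mul, pow_add]
  have hdeg : ∀ u ∈ S,
      (S.filter (HasCommonSublist (4 * t - D) u)).card ≤ (4 * t).choose D ^ 2 * 2 ^ D := by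
    intro u hu
    have hSu : S ⊆ listsOfLength Bool u.length := fun v hv =>
      mem_listsOfLength.2 ((hS v hv).1.trans (hS u hu).1.symm)
    calc _ ≤ _ := Finset.card_le_card (Finset.filter_subset_filter _ hSu)
      _ ≤ _ := card_filter_hasCommonSublist_le u _
      _ = _ := by
        rw [(hS u hu).1, Nat.choose_symm (by omega), Nat.sub_sub_self (by omega),
          Fintype.card_bool]
  obtain ⟨T, hTS, hTcard, hT⟩ := Finset.exists_subset_card_eq_pairwise_not_rel _ S
    (fun _ _ _ _ => HasCommonSublist.symm)
    (fun u hu => hasCommonSublist_self (by rw [(hS u hu).1]; omega))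
    (by have := Nat.choose_pos (show D ≤ 4 * t by omega); positivity) hdeg
    (by rw [hcard]; exact Nat.mul_le_mul_left _ (choose_four_mul_sq_mul_two_pow_le hD))
  exact ⟨T, hTcard, fun v hv => hS v (hTS hv), hT⟩

theorem five_le_ceil_two_mul_logb {t : ℕ} (ht : 5 ≤ t) : 5 ≤ ⌈(2 : ℝ) * Real.logb 2 t⌉₊ := by
  have h : (2 : ℝ) < Real.logb 2 t := by
    rw [Real.lt_logb_iff_rpow_lt one_lt_two (by positivity)]
    norm_num
    exact_mod_cast ht
  exact Nat.lt_ceil.2 (by push_cast; linarith)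

/-- **Schulman–Zuckerman inner codes** (combinatorial content of
Lemma `SZ-code`): there are constants `βin ≥ 1` and `δin > 0` such that for
all sufficiently large `t` there is a code `Enc : {0,1}^t → {0,1}^{βin·t}`
with decoder `Dec` that (1) uniquely decodes any received word within edit
distance `δin·2·βin·t` of a codeword, and (2) every contiguous substring of a
codeword of length `⌈2 log₂ t⌉` has fractional Hamming weight at least
`2/5`. -/
theorem schulman_zuckerman_inner_code :
    ∃ (βin : ℕ) (δin : ℝ), 1 ≤ βin ∧ 0 < δin ∧
      ∃ t₀ : ℕ, ∀ t : ℕ, t₀ ≤ t →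
        ∃ (Enc : List Bool → List Bool) (Dec : List Bool → Option (List Bool)),
          (∀ x : List Bool, x.length = t → (Enc x).length = βin * t) ∧
          (∀ x : List Bool, x.length = t → ∀ w : List Bool,
            (ED w (Enc x) : ℝ) ≤ δin * (2 * (βin * t)) → Dec w = some x) ∧
          (∀ x : List Bool, x.length = t → ∀ i : ℕ,
            i + ⌈(2 : ℝ) * Real.logb 2 t⌉₊ ≤ βin * t →
            (2 / 5 : ℝ) * (⌈(2 : ℝ) * Real.logb 2 t⌉₊ : ℝ) ≤
              ((((Enc x).drop i).take ⌈(2 : ℝ) * Real.logb 2 t⌉₊).count true : ℝ)) := by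
  refine ⟨4, 1 / 256, by norm_num, by norm_num, 5, fun t ht => ?_⟩
  obtain ⟨T, hTcard, hTwords, hT⟩ := exists_interleaveTrue_code (Nat.mul_div_le t 32)
  obtain ⟨Enc, hEncT, hEnc⟩ := (listsOfLength Bool t).finite_toSet.exists_injOn_of_encard_le
    (t := (T : Set (List Bool))) (by simp [card_listsOfLength, hTcard])
  have hcode : ∀ x : List Bool, x.length = t → Enc x ∈ T := fun x hx =>
    hEncT (mem_listsOfLength.2 hx)
  obtain ⟨Dec, hDec⟩ := exists_decoder (fun w x => x.length = t ∧ ED w (Enc x) ≤ t / 32)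
    fun w x y ⟨hx, hwx⟩ ⟨hy, hwy⟩ => hEnc (mem_listsOfLength.2 hx) (mem_listsOfLength.2 hy) <|
      hT.eq (hcode x hx) (hcode y hy) <| not_not.2 <|
        hasCommonSublist_of_ED_le (hTwords _ (hcode x hx)).1 (hTwords _ (hcode y hy)).1 hwx hwy
  refine ⟨Enc, Dec, fun x hx => (hTwords _ (hcode x hx)).1, fun x hx w hw => hDec w x ⟨hx, ?_⟩,
    fun x hx i hi => ?_⟩
  · rw [Nat.le_div_iff_mul_le (by norm_num)]
    exact_mod_cast (by linarith : (ED w (Enc x) : ℝ) * 32 ≤ t)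
  · obtain ⟨hlen, hchain⟩ := hTwords _ (hcode x hx)
    have h := two_mul_le_five_mul_count_true_window hchain (five_le_ceil_two_mul_logb ht)
      (hlen ▸ hi)
    have h' : (2 : ℝ) * ⌈(2 : ℝ) * Real.logb 2 t⌉₊ ≤
        5 * ((((Enc x).drop i).take ⌈(2 : ℝ) * Real.logb 2 t⌉₊).count true : ℝ) := by
      exact_mod_cast h
    linarith
end
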